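/- arXiv:2504.20640 — 2 statements merged into one kernel-verified Lean document; each statement's English description precedes it below -/
import Mathlib

section
/- Let x be irrational in (0,1) with partial quotients a_n = a_{n+1} = m where m ≥ 1. Then max{Θ_{n-1}(x), Θ_n(x)} ≥ (m+1)/((m+1)²+1). -/
/-- The Gauss map `T(x) = 1/x - ⌊1/x⌋`, with `T(0) = 0`. -/
noncomputable def gaussMap (x : ℝ) : ℝ := if x = 0 then 0 else 1 / x - ⌊1 / x⌋

/-- The `n`-th partial quotient `a_n` of the RCF expansion of `x` (for `n ≥ 1`). -/
noncomputable def rcfA (x : ℝ) (n : ℕ) : ℤ := ⌊1 / gaussMap^[n - 1] x⌋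

/-- Numerators `p_n` of the RCF convergents of `x ∈ (0,1)`. -/
noncomputable def rcfP (x : ℝ) : ℕ → ℤ
  | 0 => 0
  | 1 => 1
  | n + 2 => rcfA x (n + 2) * rcfP x (n + 1) + rcfP x n

/-- Denominators `q_n` of the RCF convergents of `x ∈ (0,1)`. -/
noncomputable def rcfQ (x : ℝ) : ℕ → ℤ
  | 0 => 1
  | 1 => rcfA x 1
  | n + 2 => rcfA x (n + 2) * rcfQ x (n + 1) + rcfQ x n

/-- Approximation coefficient `Θ_n(x) = q_n² |x - p_n/q_n|`. -/
noncomputable def Theta (x : ℝ) (n : ℕ) : ℝ :=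
  (rcfQ x n : ℝ) ^ 2 * |x - (rcfP x n : ℝ) / (rcfQ x n : ℝ)|

lemma gauss_step {y : ℝ} (hy : y ∈ Set.Ioo (0:ℝ) 1) (hirr : Irrational y) :
    gaussMap y ∈ Set.Ioo (0:ℝ) 1 ∧ Irrational (gaussMap y) := by
  have hy0 : y ≠ 0 := ne_of_gt hy.1
  have h1 : Irrational (1/y) := by simpa [one_div] using hirr.inv
  have h2 : Irrational (gaussMap y) := by
    simpa [gaussMap, hy0] using h1.sub_intCast ⌊1/y⌋
  have hfr : gaussMap y = Int.fract (1/y) := by rw [gaussMap, if_neg hy0, Int.fract]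
  have hne : gaussMap y ≠ 0 := by
    intro h
    rw [h] at h2
    exact h2 ⟨0, by norm_num⟩
  refine ⟨⟨lt_of_le_of_ne (by rw [hfr]; exact Int.fract_nonneg _) (Ne.symm hne), ?_⟩, h2⟩
  rw [hfr]; exact Int.fract_lt_one _

lemma gauss_iter {x : ℝ} (hx : x ∈ Set.Ioo (0:ℝ) 1) (hirr : Irrational x) (k : ℕ) :
    gaussMap^[k] x ∈ Set.Ioo (0:ℝ) 1 ∧ Irrational (gaussMap^[k] x) := by
  induction k with
  | zero => exact ⟨hx, hirr⟩
  | succ k ih =>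
    rw [Function.iterate_succ_apply']
    exact gauss_step ih.1 ih.2

lemma recur_key {x : ℝ} (hx : x ∈ Set.Ioo (0:ℝ) 1) (hirr : Irrational x) (k : ℕ) :
    (gaussMap^[k] x) * ((rcfA x (k+1) : ℝ) + gaussMap^[k+1] x) = 1 := by
  obtain ⟨hmem, -⟩ := gauss_iter hx hirr k
  have h0 : gaussMap^[k] x ≠ 0 := ne_of_gt hmem.1
  have : gaussMap^[k+1] x = 1 / gaussMap^[k] x - ⌊1 / gaussMap^[k] x⌋ := by
    rw [Function.iterate_succ_apply', gaussMap, if_neg h0]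
  rw [this, rcfA, Nat.add_sub_cancel]
  field_simp
  ring

lemma aA_pos {x : ℝ} (hx : x ∈ Set.Ioo (0:ℝ) 1) (hirr : Irrational x) (k : ℕ) :
    1 ≤ rcfA x (k+1) := by
  obtain ⟨hmem, -⟩ := gauss_iter hx hirr k
  rw [rcfA]
  simp only [Nat.add_sub_cancel]
  rw [Int.le_floor]
  push_cast
  rw [le_div_iff₀ hmem.1]
  linarith [hmem.2]

lemma qQ_pos {x : ℝ} (hx : x ∈ Set.Ioo (0:ℝ) 1) (hirr : Irrational x) (k : ℕ) :
    1 ≤ rcfQ x k := by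
  have H : ∀ k, 1 ≤ rcfQ x k ∧ 1 ≤ rcfQ x (k+1) := by
    intro k
    induction k with
    | zero => exact ⟨le_refl 1, by simpa [rcfQ] using aA_pos hx hirr 0⟩
    | succ k ih =>
      refine ⟨ih.2, ?_⟩
      show 1 ≤ rcfA x (k+2) * rcfQ x (k+1) + rcfQ x k
      have := aA_pos hx hirr (k+1)
      nlinarith [ih.1, ih.2]
  exact (H k).1

lemma key_id {x : ℝ} (hx : x ∈ Set.Ioo (0:ℝ) 1) (hirr : Irrational x) (k : ℕ) :
    x * ((rcfQ x (k+1) : ℝ) + (rcfQ x k : ℝ) * gaussMap^[k+1] x)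
      = (rcfP x (k+1) : ℝ) + (rcfP x k : ℝ) * gaussMap^[k+1] x := by
  induction k with
  | zero =>
    have h := recur_key hx hirr 0
    simp only [Function.iterate_zero_apply] at h
    have h' : x * ((rcfA x 1 : ℝ) + gaussMap^[1] x) = 1 := by
      simpa using h
    simp only [rcfQ, rcfP]
    push_cast
    linear_combination h'
  | succ k ih =>
    have h := recur_key hx hirr (k+1)
    show x * ((rcfQ x (k+2) : ℝ) + (rcfQ x (k+1) : ℝ) * gaussMap^[k+2] x)
      = (rcfP x (k+2) : ℝ) + (rcfP x (k+1) : ℝ) * gaussMap^[k+2] x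
    have hq : (rcfQ x (k+2) : ℝ) = rcfA x (k+2) * rcfQ x (k+1) + rcfQ x k := by
      rw [show rcfQ x (k+2) = rcfA x (k+2) * rcfQ x (k+1) + rcfQ x k from rfl]; push_cast; ring
    have hp : (rcfP x (k+2) : ℝ) = rcfA x (k+2) * rcfP x (k+1) + rcfP x k := by
      rw [show rcfP x (k+2) = rcfA x (k+2) * rcfP x (k+1) + rcfP x k from rfl]; push_cast; ring
    rw [hq, hp]
    have h' : gaussMap^[k+1] x * ((rcfA x (k+2) : ℝ) + gaussMap^[k+2] x) = 1 := by
      simpa using h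
    linear_combination ((rcfA x (k+2) : ℝ) + gaussMap^[k+2] x) * ih
      - (x * (rcfQ x k : ℝ) - (rcfP x k : ℝ)) * h'

lemma det_id (x : ℝ) (k : ℕ) :
    rcfP x (k+1) * rcfQ x k - rcfP x k * rcfQ x (k+1) = (-1)^k := by
  induction k with
  | zero => simp [rcfP, rcfQ]
  | succ k ih =>
    show rcfP x (k+2) * rcfQ x (k+1) - rcfP x (k+1) * rcfQ x (k+2) = (-1)^(k+1)
    rw [show rcfP x (k+2) = rcfA x (k+2) * rcfP x (k+1) + rcfP x k from rfl,
        show rcfQ x (k+2) = rcfA x (k+2) * rcfQ x (k+1) + rcfQ x k from rfl]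
    rw [pow_succ]
    linear_combination (-1 : ℤ) * ih

lemma theta_eq {x : ℝ} (n : ℕ) (hq : 0 < (rcfQ x n : ℝ)) :
    Theta x n = (rcfQ x n : ℝ) * |x * (rcfQ x n : ℝ) - (rcfP x n : ℝ)| := by
  rw [Theta]
  have h : x - (rcfP x n : ℝ) / (rcfQ x n : ℝ)
      = (x * (rcfQ x n : ℝ) - (rcfP x n : ℝ)) / (rcfQ x n : ℝ) := by
    field_simp
  rw [h, abs_div, abs_of_pos hq]
  field_simp

theorem easy_case_eq_max (x : ℝ) (hx : x ∈ Set.Ioo (0 : ℝ) 1) (hirr : Irrational x)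
    (n : ℕ) (hn : 1 ≤ n) (m : ℕ) (hm : 1 ≤ m)
    (han : rcfA x n = m) (han1 : rcfA x (n + 1) = m) :
    max (Theta x (n - 1)) (Theta x n) ≥ ((m : ℝ) + 1) / (((m : ℝ) + 1) ^ 2 + 1) := by
  obtain ⟨k, rfl⟩ : ∃ k, n = k + 1 := ⟨n - 1, by omega⟩
  simp only [Nat.add_sub_cancel]
  set t : ℝ := gaussMap^[k+1] x with hT
  set Q : ℝ := (rcfQ x (k+1) : ℝ) with hQdef
  set R : ℝ := (rcfQ x k : ℝ) with hRdef
  set P1 : ℝ := (rcfP x (k+1) : ℝ) with hP1def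
  set P0 : ℝ := (rcfP x k : ℝ) with hP0def
  have ht : t ∈ Set.Ioo (0:ℝ) 1 := (gauss_iter hx hirr (k+1)).1
  have hQ : 1 ≤ Q := by rw [hQdef]; exact_mod_cast qQ_pos hx hirr (k+1)
  have hR : 1 ≤ R := by rw [hRdef]; exact_mod_cast qQ_pos hx hirr k
  have key : x * (Q + R * t) = P1 + P0 * t := key_id hx hirr k
  have det : P1 * R - P0 * Q = (-1:ℝ)^k := by
    rw [hP1def, hP0def, hQdef, hRdef]
    exact_mod_cast congrArg (Int.cast : ℤ → ℝ) (det_id x k)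
  set D : ℝ := Q + R * t with hDdef
  have hD : 0 < D := by have := ht.1; nlinarith
  -- partial quotient fact
  have hfl : ⌊1/t⌋ = (m : ℤ) := by
    have : rcfA x (k+1+1) = ⌊1/t⌋ := by rw [rcfA, hT]; norm_num
    rw [← this, han1]
  have htm : 1 < ((m:ℝ) + 1) * t := by
    have h1 : 1/t < ((m:ℝ) + 1) := by
      have := Int.lt_floor_add_one (1/t)
      rw [hfl] at this
      push_cast at this
      linarith
    rw [div_lt_iff₀ ht.1] at h1
    linarith
  -- formulas for Theta
  have e1 : x * Q - P1 = (-1:ℝ)^(k+1) * t / D := by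
    rw [eq_div_iff hD.ne']
    rw [hDdef]
    linear_combination Q * key - t * det
  have e0 : x * R - P0 = (-1:ℝ)^k / D := by
    rw [eq_div_iff hD.ne']
    rw [hDdef]
    linear_combination R * key + det
  have Th1 : Theta x (k+1) = Q * t / D := by
    rw [theta_eq (k+1) (by rw [← hQdef]; linarith), ← hQdef, ← hP1def, e1, abs_div,
      abs_mul, abs_pow, abs_neg, abs_one, one_pow, one_mul, abs_of_pos ht.1, abs_of_pos hD]
    ring
  have Th0 : Theta x k = R / D := by
    rw [theta_eq k (by rw [← hRdef]; linarith), ← hRdef, ← hP0def, e0, abs_div,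
      abs_pow, abs_neg, abs_one, one_pow, abs_of_pos hD]
    ring
  rw [Th0, Th1, ge_iff_le]
  have hK : (0:ℝ) < ((m:ℝ)+1)^2 + 1 := by positivity
  have htM : t ≤ (m:ℝ) + 1 := by
    have : (1:ℝ) ≤ (m:ℝ) := by exact_mod_cast hm
    linarith [ht.2]
  rcases le_total (Q * t) R with h | h
  · refine le_trans ?_ (le_max_left _ _)
    rw [div_le_div_iff₀ hK hD]
    nlinarith [mul_nonneg (mul_nonneg (sub_nonneg.mpr htm.le) (sub_nonneg.mpr htM))
        (by linarith : (0:ℝ) ≤ R), ht.1,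
      mul_le_mul_of_nonneg_left h (by positivity : (0:ℝ) ≤ (m:ℝ)+1)]
  · refine le_trans ?_ (le_max_right _ _)
    rw [div_le_div_iff₀ hK hD]
    nlinarith [mul_nonneg (mul_nonneg (sub_nonneg.mpr htm.le) (sub_nonneg.mpr htM))
        (by linarith : (0:ℝ) ≤ Q), ht.1,
      mul_le_mul_of_nonneg_left (mul_le_mul_of_nonneg_right h ht.1.le)
        (by positivity : (0:ℝ) ≤ (m:ℝ)+1)]
end

section
/- Let x be irrational in (0,1), n ≥ 1, and set m = min{a_n, a_{n+1}} and M = max{a_n, a_{n+1}} with 1 ≤ m < M. Then max{Θ_{n-1}(x), Θ_n(x)} ≥ M/((m+1)M + 1). -/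
lemma gaussMap_step (x : ℝ) (hx : x ∈ Set.Ioo (0:ℝ) 1) (hirr : Irrational x) :
    gaussMap x ∈ Set.Ioo (0:ℝ) 1 ∧ Irrational (gaussMap x) := by
  obtain ⟨hx0, hx1⟩ := hx
  have hne : x ≠ 0 := ne_of_gt hx0
  have hg : gaussMap x = Int.fract (1 / x) := by
    rw [gaussMap, if_neg hne, Int.fract]
  have hinv : Irrational (1 / x) := by
    simpa [one_div] using hirr.inv
  have hfi : Irrational (Int.fract (1 / x)) := by
    unfold Int.fract; exact hinv.sub_intCast _
  have h0 : Int.fract (1 / x) ≠ 0 := by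
    intro h; rw [h] at hfi; exact hfi ⟨0, by norm_num⟩
  constructor
  · rw [hg]
    exact ⟨lt_of_le_of_ne (Int.fract_nonneg _) (Ne.symm h0), Int.fract_lt_one _⟩
  · rw [hg]; exact hfi

section main
variable (x : ℝ) (hx : x ∈ Set.Ioo (0:ℝ) 1) (hirr : Irrational x)

include hx hirr

lemma iter_mem : ∀ k, gaussMap^[k] x ∈ Set.Ioo (0:ℝ) 1 ∧ Irrational (gaussMap^[k] x) := by
  intro k
  induction k with
  | zero => exact ⟨hx, hirr⟩
  | succ k ih =>
    rw [Function.iterate_succ_apply']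
    exact gaussMap_step _ ih.1 ih.2

lemma rcfA_pos : ∀ k, 1 ≤ rcfA x (k + 1) := by
  intro k
  have h := (iter_mem x hx hirr k).1
  have : (1:ℝ) ≤ 1 / gaussMap^[k] x := by
    rw [le_div_iff₀ h.1]; linarith [h.2]
  have : (1:ℤ) ≤ ⌊1 / gaussMap^[k] x⌋ := by
    exact_mod_cast Int.le_floor.mpr (by exact_mod_cast this)
  simpa [rcfA] using this

lemma rel : ∀ k, gaussMap^[k] x * ((rcfA x (k + 1) : ℝ) + gaussMap^[k+1] x) = 1 := by
  intro k
  have h := (iter_mem x hx hirr k).1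
  have hne : gaussMap^[k] x ≠ 0 := ne_of_gt h.1
  rw [Function.iterate_succ_apply']
  have : gaussMap (gaussMap^[k] x) = 1 / gaussMap^[k] x - ⌊1 / gaussMap^[k] x⌋ := by
    simp [gaussMap, hne]
  rw [this]
  have hA : (rcfA x (k+1) : ℝ) = (⌊1 / gaussMap^[k] x⌋ : ℝ) := by simp [rcfA]
  rw [hA]
  field_simp
  ring

lemma rcfQ_pos : ∀ k, 1 ≤ rcfQ x k := by
  intro k
  induction k using Nat.strong_induction_on with
  | _ k ih =>
    match k with
    | 0 => simp [rcfQ]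
    | 1 => simpa [rcfQ] using rcfA_pos x hx hirr 0
    | (k+2) =>
      have h1 := ih (k+1) (by omega)
      have h0 := ih k (by omega)
      have ha := rcfA_pos x hx hirr (k+1)
      show 1 ≤ rcfA x (k + 2) * rcfQ x (k + 1) + rcfQ x k
      nlinarith

lemma rcfQ_mono : ∀ k, rcfQ x k ≤ rcfQ x (k + 1) := by
  intro k
  match k with
  | 0 => simpa [rcfQ] using rcfA_pos x hx hirr 0
  | (k+1) =>
    have h1 := rcfQ_pos x hx hirr (k+1)
    have h0 := rcfQ_pos x hx hirr k
    have ha := rcfA_pos x hx hirr (k+1)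
    show rcfQ x (k+1) ≤ rcfA x (k + 2) * rcfQ x (k + 1) + rcfQ x k
    nlinarith

lemma rcfQ_bounds : ∀ k, rcfA x (k+1) * rcfQ x k ≤ rcfQ x (k+1) ∧
    rcfQ x (k+1) ≤ (rcfA x (k+1) + 1) * rcfQ x k := by
  intro k
  match k with
  | 0 =>
    refine ⟨?_, ?_⟩ <;> simp [rcfQ]
  | (j+1) =>
    have h0 := rcfQ_pos x hx hirr j
    have hmono := rcfQ_mono x hx hirr j
    constructor
    · show rcfA x (j+2) * rcfQ x (j+1) ≤ rcfA x (j+2) * rcfQ x (j+1) + rcfQ x j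
      omega
    · show rcfA x (j+2) * rcfQ x (j+1) + rcfQ x j ≤ (rcfA x (j+2) + 1) * rcfQ x (j+1)
      nlinarith

lemma det : ∀ k, rcfP x (k+1) * rcfQ x k - rcfP x k * rcfQ x (k+1) = (-1)^k := by
  intro k
  induction k with
  | zero => simp [rcfP, rcfQ]
  | succ k ih =>
    show rcfP x (k+2) * rcfQ x (k+1) - rcfP x (k+1) * rcfQ x (k+2) = (-1)^(k+1)
    have hP : rcfP x (k+2) = rcfA x (k+2) * rcfP x (k+1) + rcfP x k := rfl
    have hQ : rcfQ x (k+2) = rcfA x (k+2) * rcfQ x (k+1) + rcfQ x k := rfl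
    rw [hP, hQ]; ring_nf; ring_nf at ih; linarith [ih]

lemma x_eq : ∀ k, x * ((rcfQ x (k+1) : ℝ) + (rcfQ x k : ℝ) * gaussMap^[k+1] x)
    = (rcfP x (k+1) : ℝ) + (rcfP x k : ℝ) * gaussMap^[k+1] x := by
  intro k
  induction k with
  | zero =>
    have h := rel x hx hirr 0
    simp only [Function.iterate_zero_apply] at h
    simp only [rcfP, rcfQ]
    push_cast
    nlinarith [h]
  | succ k ih =>
    have h := rel x hx hirr (k+1)
    have hP : (rcfP x (k+2) : ℝ) = rcfA x (k+2) * rcfP x (k+1) + rcfP x k := by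
      norm_cast
    have hQ : (rcfQ x (k+2) : ℝ) = rcfA x (k+2) * rcfQ x (k+1) + rcfQ x k := by
      norm_cast
    rw [hP, hQ]
    set t := gaussMap^[k+1] x
    set t' := gaussMap^[k+2] x
    set a : ℝ := (rcfA x (k+2) : ℝ)
    -- h : t * (a + t') = 1, ih : x * (Q_{k+1} + Q_k t) = P_{k+1} + P_k t
    linear_combination (a + t') * ih + ((rcfP x k : ℝ) - x * (rcfQ x k : ℝ)) * h

end main

lemma helper_div (q D v : ℝ) (hq : q ≠ 0) (hD : D ≠ 0) :
    q ^ 2 * (v / (D * q)) = q * v / D := by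
  field_simp

section final
variable (x : ℝ) (hx : x ∈ Set.Ioo (0:ℝ) 1) (hirr : Irrational x)
include hx hirr

lemma theta_formulas (k : ℕ) :
    Theta x k = (rcfQ x k : ℝ) /
      ((rcfQ x (k+1):ℝ) + (rcfQ x k:ℝ) * gaussMap^[k+1] x) ∧
    Theta x (k+1) = (rcfQ x (k+1) : ℝ) * gaussMap^[k+1] x /
      ((rcfQ x (k+1):ℝ) + (rcfQ x k:ℝ) * gaussMap^[k+1] x) := by
  have ht := (iter_mem x hx hirr (k+1)).1
  have hQk : (1:ℝ) ≤ (rcfQ x k : ℝ) := by exact_mod_cast rcfQ_pos x hx hirr k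
  have hQk1 : (1:ℝ) ≤ (rcfQ x (k+1) : ℝ) := by exact_mod_cast rcfQ_pos x hx hirr (k+1)
  have hQkp : (0:ℝ) < (rcfQ x k : ℝ) := by linarith
  have hQk1p : (0:ℝ) < (rcfQ x (k+1) : ℝ) := by linarith
  have hQkne : (rcfQ x k : ℝ) ≠ 0 := ne_of_gt hQkp
  have hQk1ne : (rcfQ x (k+1) : ℝ) ≠ 0 := ne_of_gt hQk1p
  have hDp : (0:ℝ) < (rcfQ x (k+1):ℝ) + (rcfQ x k:ℝ) * gaussMap^[k+1] x := by
    nlinarith [ht.1]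
  have hDne : (rcfQ x (k+1):ℝ) + (rcfQ x k:ℝ) * gaussMap^[k+1] x ≠ 0 := ne_of_gt hDp
  have hxeq := x_eq x hx hirr k
  have hdetR : (rcfP x (k+1):ℝ) * rcfQ x k - rcfP x k * rcfQ x (k+1) = (-1)^k := by
    exact_mod_cast det x hx hirr k
  constructor
  · have key1 : (x * (rcfQ x k : ℝ) - (rcfP x k : ℝ)) *
        ((rcfQ x (k+1):ℝ) + (rcfQ x k:ℝ) * gaussMap^[k+1] x) = (-1)^k := by
      linear_combination (rcfQ x k : ℝ) * hxeq + hdetR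
    have h1 : x - (rcfP x k : ℝ) / (rcfQ x k : ℝ)
        = (x * (rcfQ x k : ℝ) - (rcfP x k : ℝ)) / (rcfQ x k : ℝ) := by
      rw [sub_div, mul_div_cancel_right₀ x hQkne]
    have hsub : x - (rcfP x k : ℝ) / (rcfQ x k : ℝ)
        = (-1)^k / (((rcfQ x (k+1):ℝ) + (rcfQ x k:ℝ) * gaussMap^[k+1] x) * (rcfQ x k : ℝ)) := by
      rw [h1, div_eq_div_iff hQkne (by positivity)]
      linear_combination (rcfQ x k : ℝ) * key1
    rw [Theta, hsub, abs_div, abs_pow, abs_neg, abs_one, one_pow,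
      abs_of_pos (by positivity : (0:ℝ) < ((rcfQ x (k+1):ℝ) + (rcfQ x k:ℝ) * gaussMap^[k+1] x) * (rcfQ x k : ℝ))]
    rw [helper_div _ _ _ hQkne hDne, mul_one]
  · have key2 : (x * (rcfQ x (k+1) : ℝ) - (rcfP x (k+1) : ℝ)) *
        ((rcfQ x (k+1):ℝ) + (rcfQ x k:ℝ) * gaussMap^[k+1] x)
        = (-1)^(k+1) * gaussMap^[k+1] x := by
      linear_combination (rcfQ x (k+1) : ℝ) * hxeq - gaussMap^[k+1] x * hdetR
    have h1 : x - (rcfP x (k+1) : ℝ) / (rcfQ x (k+1) : ℝ)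
        = (x * (rcfQ x (k+1) : ℝ) - (rcfP x (k+1) : ℝ)) / (rcfQ x (k+1) : ℝ) := by
      rw [sub_div, mul_div_cancel_right₀ x hQk1ne]
    have hsub : x - (rcfP x (k+1) : ℝ) / (rcfQ x (k+1) : ℝ)
        = (-1)^(k+1) * gaussMap^[k+1] x /
          (((rcfQ x (k+1):ℝ) + (rcfQ x k:ℝ) * gaussMap^[k+1] x) * (rcfQ x (k+1) : ℝ)) := by
      rw [h1, div_eq_div_iff hQk1ne (by positivity)]
      linear_combination (rcfQ x (k+1) : ℝ) * key2
    rw [Theta, hsub, abs_div, abs_mul, abs_pow, abs_neg, abs_one, one_pow, one_mul,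
      abs_of_pos ht.1,
      abs_of_pos (by positivity : (0:ℝ) < ((rcfQ x (k+1):ℝ) + (rcfQ x k:ℝ) * gaussMap^[k+1] x) * (rcfQ x (k+1) : ℝ))]
    rw [helper_div _ _ _ hQk1ne hDne]

end final
theorem easy_case_ne_max (x : ℝ) (hx : x ∈ Set.Ioo (0 : ℝ) 1) (hirr : Irrational x)
    (n : ℕ) (hn : 1 ≤ n) (m M : ℕ) (hm : 1 ≤ m) (hmM : m < M)
    (hminA : min (rcfA x n) (rcfA x (n + 1)) = m)
    (hmaxA : max (rcfA x n) (rcfA x (n + 1)) = M) :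
    max (Theta x (n - 1)) (Theta x n) ≥ (M : ℝ) / (((m : ℝ) + 1) * M + 1) := by
  obtain ⟨k, rfl⟩ : ∃ k, n = k + 1 := ⟨n - 1, by omega⟩
  simp only [Nat.add_sub_cancel]
  set t := gaussMap^[k+1] x with htdef
  have ht := (iter_mem x hx hirr (k+1)).1
  have hQk : (1:ℝ) ≤ (rcfQ x k : ℝ) := by exact_mod_cast rcfQ_pos x hx hirr k
  have hQk1 : (1:ℝ) ≤ (rcfQ x (k+1) : ℝ) := by exact_mod_cast rcfQ_pos x hx hirr (k+1)
  have hDp : (0:ℝ) < (rcfQ x (k+1):ℝ) + (rcfQ x k:ℝ) * t := by nlinarith [ht.1]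
  obtain ⟨hth0, hth1⟩ := theta_formulas x hx hirr k
  have hbfloor : rcfA x (k+2) = ⌊1 / t⌋ := rfl
  have hMpos : (1:ℝ) ≤ (M:ℝ) := by
    have : 1 ≤ M := by omega
    exact_mod_cast this
  have hden : (0:ℝ) < ((m:ℝ)+1) * M + 1 := by positivity
  have hmR : (1:ℝ) ≤ (m:ℝ) := by exact_mod_cast hm
  rcases le_total (rcfA x (k+1)) (rcfA x (k+2)) with h | h
  · -- a_n = m, a_{n+1} = M
    have ham : rcfA x (k+1) = (m:ℤ) := by rw [min_eq_left h] at hminA; exact hminA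
    have haM : rcfA x (k+2) = (M:ℤ) := by rw [max_eq_right h] at hmaxA; exact hmaxA
    have hQub : (rcfQ x (k+1) : ℝ) ≤ ((m:ℝ)+1) * rcfQ x k := by
      have := (rcfQ_bounds x hx hirr k).2
      rw [ham] at this
      exact_mod_cast this
    have hMt : (M:ℝ) * t ≤ 1 := by
      have : (M:ℝ) ≤ 1 / t := by
        exact_mod_cast (haM ▸ hbfloor ▸ Int.floor_le (1 / t))
      rw [le_div_iff₀ ht.1] at this
      linarith
    refine le_trans ?_ (le_max_left _ _)
    rw [hth0, div_le_div_iff₀ hden hDp]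
    nlinarith [mul_le_mul_of_nonneg_left hQub (le_of_lt (lt_of_lt_of_le one_pos hMpos)),
      mul_le_mul_of_nonneg_left hMt (le_trans zero_le_one hQk)]
  · -- a_n = M, a_{n+1} = m
    have haM : rcfA x (k+1) = (M:ℤ) := by rw [max_eq_left h] at hmaxA; exact hmaxA
    have ham : rcfA x (k+2) = (m:ℤ) := by rw [min_eq_right h] at hminA; exact hminA
    have hQlb : (M:ℝ) * rcfQ x k ≤ (rcfQ x (k+1) : ℝ) := by
      have := (rcfQ_bounds x hx hirr k).1
      rw [haM] at this
      exact_mod_cast this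
    have hmt : (1:ℝ) ≤ ((m:ℝ)+1) * t := by
      have : 1 / t < (m:ℝ) + 1 := by
        exact_mod_cast (ham ▸ hbfloor ▸ Int.lt_floor_add_one (1 / t))
      rw [div_lt_iff₀ ht.1] at this
      nlinarith
    refine le_trans ?_ (le_max_right _ _)
    rw [hth1, div_le_div_iff₀ hden hDp]
    nlinarith [mul_le_mul_of_nonneg_left hmt (mul_nonneg (le_of_lt (lt_of_lt_of_le one_pos hMpos)) (le_trans zero_le_one hQk1)),
      mul_le_mul_of_nonneg_right hQlb (le_of_lt ht.1)]
end
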